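/- A connected finite simple graph Y is bipartite if and only if κ(Y) is odd, where κ(Y) is the number of click-equivalence classes of acyclic orientations of Y. -/

import Mathlib

namespace AcycPaper

variable {V : Type*}

/-- `r` is an orientation of the graph `Y`: exactly one direction per edge. -/
def IsOrientation (Y : SimpleGraph V) (r : V → V → Prop) : Prop :=
  (∀ i j, Y.Adj i j ↔ (r i j ∨ r j i)) ∧ ∀ i j, r i j → ¬ r j i

/-- A relation is acyclic if it has no directed cycles. -/
def IsAcyclicRel (r : V → V → Prop) : Prop := ∀ v, ¬ Relation.TransGen r v v

/-- The set of acyclic orientations of `Y`. -/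
def Acyc (Y : SimpleGraph V) : Set (V → V → Prop) :=
  {r | IsOrientation Y r ∧ IsAcyclicRel r}

/-- `v` is a source: no edge points into `v`. -/
def IsSource (r : V → V → Prop) (v : V) : Prop := ∀ j, ¬ r j v

open Classical in
/-- Click (source-to-sink move) at `v`: reverse all edges incident to `v`. -/
def click (r : V → V → Prop) (v : V) : V → V → Prop :=
  fun i j => if v = i ∨ v = j then r j i else r i j

/-- One click step between acyclic orientations. -/
def ClickStep (Y : SimpleGraph V) (r r' : V → V → Prop) : Prop :=
  r ∈ Acyc Y ∧ ∃ v, IsSource r v ∧ r' = click r v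

/-- κ-equivalence: the equivalence relation generated by clicks. -/
def KEquiv (Y : SimpleGraph V) : (V → V → Prop) → (V → V → Prop) → Prop :=
  Relation.EqvGen (ClickStep Y)

/-- The set of κ-equivalence classes of acyclic orientations. -/
def KQuot (Y : SimpleGraph V) := Quot (fun a b : Acyc Y => ClickStep Y a.1 b.1)

/-- κ(Y): number of κ-equivalence classes. -/
noncomputable def kappa (Y : SimpleGraph V) : ℕ := Nat.card (KQuot Y)

/-- α(Y): number of acyclic orientations. -/
noncomputable def alpha (Y : SimpleGraph V) : ℕ := Nat.card (Acyc Y)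

/-!
Record an orientation `r` by its edge signs `edgeSign r i j = ±1`. A click at a source `v` adds
`2 (δᵥ j - δᵥ i)` to them, so click-equivalent orientations have edge signs differing by twice a
coboundary (`PotentialEquiv`). Conversely, if `edgeSign s = edgeSign r + 2 dψ` with `ψ ≤ M`,
clicking a source of `s` among the minima of `ψ` raises `ψ` there by one; this terminates at
`ψ ≡ M`, where `s = r`. So κ-classes are exactly the `PotentialEquiv`-classes.

Reversing every edge is therefore an involution of the κ-classes, and κ(Y) is congruent mod 2 to
the number of classes it fixes. A class is fixed iff `edgeSign r = dφ` for some `φ` (`IsGraded`).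
Then `φ mod 2` is a proper 2-colouring; a 2-colouring orients every edge from colour 0 to colour 1
gradedly; and on a connected graph any two graded orientations are `PotentialEquiv`, because the
difference of their heights has constant parity. So there is one fixed class if Y is bipartite
and none otherwise.
-/

theorem _root_.SimpleGraph.Reachable.eq_of_forall_adj {α : Type*} {G : SimpleGraph V}
    {f : V → α} (hf : ∀ i j, G.Adj i j → f i = f j) {u v : V} (h : G.Reachable u v) :
    f u = f v := by
  obtain ⟨w⟩ := h
  induction w with
  | nil => rfl
  | cons hadj _ ih => exact (hf _ _ hadj).trans ih

theorem _root_.Function.Involutive.card_modEq_card_fixedPoints {α : Type*} [Finite α]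
    {f : α → α} (hf : Function.Involutive f) :
    Nat.card α ≡ Nat.card (Function.fixedPoints f) [MOD 2] := by
  classical
  have : Fintype α := Fintype.ofFinite α
  let g : Function.End α := f
  have hsq : g ^ 2 ^ 1 = 1 := funext hf
  simpa only [Nat.card_eq_fintype_card] using Equiv.Perm.card_fixedPoints_modEq hsq

section

variable {Y : SimpleGraph V} {r s : V → V → Prop} {i j v : V}

open Classical in
noncomputable def edgeSign (r : V → V → Prop) (i j : V) : ℤ :=
  (if r i j then 1 else 0) - if r j i then 1 else 0

theorem edgeSign_comm (r : V → V → Prop) (i j : V) : edgeSign r j i = -edgeSign r i j :=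
  (neg_sub _ _).symm

theorem edgeSign_swap (r : V → V → Prop) (i j : V) :
    edgeSign (Function.swap r) i j = -edgeSign r i j :=
  edgeSign_comm r i j

theorem neg_one_le_edgeSign (r : V → V → Prop) (i j : V) : -1 ≤ edgeSign r i j := by
  unfold edgeSign; split_ifs <;> norm_num

theorem rel_of_edgeSign_eq_one (h : edgeSign r i j = 1) : r i j := by
  by_contra hn
  unfold edgeSign at h
  split_ifs at h <;> simp_all

theorem IsOrientation.edgeSign_eq_one (ho : IsOrientation Y r) (h : r i j) :
    edgeSign r i j = 1 := by
  simp [edgeSign, h, ho.2 i j h]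

theorem IsOrientation.edgeSign_eq_neg_one (ho : IsOrientation Y r) (h : r j i) :
    edgeSign r i j = -1 := by
  rw [← neg_neg (edgeSign r i j), ← edgeSign_comm, ho.edgeSign_eq_one h]

theorem IsOrientation.edgeSign_eq_one_or_neg_one (ho : IsOrientation Y r) (h : Y.Adj i j) :
    edgeSign r i j = 1 ∨ edgeSign r i j = -1 :=
  ((ho.1 i j).1 h).imp ho.edgeSign_eq_one ho.edgeSign_eq_neg_one

theorem IsOrientation.odd_edgeSign (ho : IsOrientation Y r) (h : Y.Adj i j) :
    Odd (edgeSign r i j) := by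
  rcases ho.edgeSign_eq_one_or_neg_one h with h | h <;> rw [h] <;> decide

theorem IsOrientation.swap (ho : IsOrientation Y r) : IsOrientation Y (Function.swap r) :=
  ⟨fun i j => (ho.1 i j).trans or_comm, fun i j h => ho.2 j i h⟩

theorem IsOrientation.eq_of_edgeSign_eq (hr : IsOrientation Y r) (hs : IsOrientation Y s)
    (h : ∀ i j, Y.Adj i j → edgeSign r i j = edgeSign s i j) : r = s := by
  funext i j
  apply propext
  constructor
  · intro hij
    apply rel_of_edgeSign_eq_one
    rw [← h i j ((hr.1 i j).2 (Or.inl hij)), hr.edgeSign_eq_one hij]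
  · intro hij
    apply rel_of_edgeSign_eq_one
    rw [h i j ((hs.1 i j).2 (Or.inl hij)), hs.edgeSign_eq_one hij]

theorem isAcyclicRel_of_strictMono {α : Type*} [Preorder α] (φ : V → α)
    (h : ∀ i j, r i j → φ i < φ j) : IsAcyclicRel r := by
  have hlt : ∀ a b, Relation.TransGen r a b → φ a < φ b := fun a b hab => by
    induction hab with
    | single hab => exact h _ _ hab
    | tail _ hbc ih => exact ih.trans (h _ _ hbc)
  exact fun v hv => lt_irrefl _ (hlt v v hv)

theorem IsAcyclicRel.wellFounded [Finite V] (hr : IsAcyclicRel r) : WellFounded r := by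
  have : IsTrans V (Relation.TransGen r) := ⟨fun _ _ _ => Relation.TransGen.trans⟩
  have : Std.Irrefl (Relation.TransGen r) := ⟨hr⟩
  exact Subrelation.wf Relation.TransGen.single (Finite.wellFounded_of_trans_of_irrefl _)

theorem swap_mem_acyc (hr : r ∈ Acyc Y) : Function.swap r ∈ Acyc Y :=
  ⟨hr.1.swap, fun v hv => hr.2 v (Relation.transGen_swap.1 hv)⟩

theorem click_of_eq_or (h : v = i ∨ v = j) : click r v i j = r j i := if_pos h

theorem click_of_ne (hi : v ≠ i) (hj : v ≠ j) : click r v i j = r i j :=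
  if_neg (by tauto)

theorem click_swap (r : V → V → Prop) (v : V) :
    click (Function.swap r) v = Function.swap (click r v) := by
  funext i j
  by_cases h : v = i ∨ v = j
  · change click _ v i j = click r v j i
    rw [click_of_eq_or h, click_of_eq_or h.symm]
  · change click _ v i j = click r v j i
    rw [click_of_ne (by tauto) (by tauto), click_of_ne (by tauto) (by tauto)]

theorem click_click (r : V → V → Prop) (v : V) : click (click r v) v = r := by
  funext i j
  by_cases h : v = i ∨ v = j
  · rw [click_of_eq_or h, click_of_eq_or h.symm]
  · rw [click_of_ne (by tauto) (by tauto), click_of_ne (by tauto) (by tauto)]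

theorem IsOrientation.click (ho : IsOrientation Y r) (v : V) :
    IsOrientation Y (click r v) := by
  refine ⟨fun i j => ?_, fun i j => ?_⟩ <;> by_cases h : v = i ∨ v = j
  · rw [click_of_eq_or h, click_of_eq_or h.symm, ho.1 i j, or_comm]
  · rw [click_of_ne (by tauto) (by tauto), click_of_ne (by tauto) (by tauto), ho.1 i j]
  · rw [click_of_eq_or h, click_of_eq_or h.symm]; exact ho.2 j i
  · rw [click_of_ne (by tauto) (by tauto), click_of_ne (by tauto) (by tauto)]; exact ho.2 i j

theorem ne_of_click_rel (hv : IsSource r v) {a b : V} (h : click r v a b) : a ≠ v := by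
  rintro rfl
  exact hv b (by rwa [click_of_eq_or (Or.inl rfl)] at h)

theorem click_mem_acyc (hr : r ∈ Acyc Y) (hv : IsSource r v) : click r v ∈ Acyc Y := by
  have lift : ∀ a b, Relation.TransGen (click r v) a b → b ≠ v → Relation.TransGen r a b := by
    intro a b hab
    induction hab with
    | single h =>
      exact fun hb => .single (by rwa [click_of_ne (ne_of_click_rel hv h).symm hb.symm] at h)
    | tail _ h ih =>
      have hb := ne_of_click_rel hv h
      exact fun hc => .tail (ih hb) (by rwa [click_of_ne hb.symm hc.symm] at h)
  refine ⟨hr.1.click v, fun w hw => ?_⟩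
  obtain ⟨b, hwb, -⟩ := Relation.TransGen.head'_iff.1 hw
  exact hr.2 w (lift w w hw (ne_of_click_rel hv hwb))

theorem ClickStep.swap (h : ClickStep Y r s) :
    ClickStep Y (Function.swap s) (Function.swap r) := by
  obtain ⟨hr, v, hv, rfl⟩ := h
  refine ⟨swap_mem_acyc (click_mem_acyc hr hv), v, fun j hj => hv j ?_, ?_⟩
  · change click r v v j at hj
    rwa [click_of_eq_or (Or.inl rfl)] at hj
  · rw [click_swap, click_click]

theorem edgeSign_click [DecidableEq V] (ho : IsOrientation Y r) (hv : IsSource r v)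
    (hadj : Y.Adj i j) :
    edgeSign (click r v) i j =
      edgeSign r i j + 2 * ((Pi.single v 1 : V → ℤ) j - (Pi.single v 1 : V → ℤ) i) := by
  by_cases h : v = i ∨ v = j
  · have hsign : edgeSign (click r v) i j = -edgeSign r i j := by
      unfold edgeSign; rw [click_of_eq_or h, click_of_eq_or h.symm]; ring
    rcases h with rfl | rfl
    · rw [hsign, ho.edgeSign_eq_one (((ho.1 v j).1 hadj).resolve_right (hv j)),
        Pi.single_eq_same, Pi.single_eq_of_ne hadj.ne.symm]
      ring
    · rw [hsign, ho.edgeSign_eq_neg_one (((ho.1 i v).1 hadj).resolve_left (hv i)),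
        Pi.single_eq_same, Pi.single_eq_of_ne hadj.ne]
      ring
  · have hi : i ≠ v := fun h' => h (Or.inl h'.symm)
    have hj : j ≠ v := fun h' => h (Or.inr h'.symm)
    unfold edgeSign
    rw [click_of_ne (Ne.symm hi) (Ne.symm hj), click_of_ne (Ne.symm hj) (Ne.symm hi),
      Pi.single_eq_of_ne hi, Pi.single_eq_of_ne hj]
    ring

variable (Y) in
def PotentialEquiv (r s : V → V → Prop) : Prop :=
  ∃ ψ : V → ℤ, ∀ i j, Y.Adj i j → edgeSign s i j = edgeSign r i j + 2 * (ψ j - ψ i)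

variable (Y) in
theorem potentialEquiv_equivalence : Equivalence (PotentialEquiv Y) where
  refl _ := ⟨0, fun _ _ _ => by simp⟩
  symm := fun ⟨ψ, h⟩ => ⟨-ψ, fun i j hadj => by simp only [h i j hadj, Pi.neg_apply]; ring⟩
  trans := fun ⟨ψ, h⟩ ⟨χ, h'⟩ =>
    ⟨ψ + χ, fun i j hadj => by simp only [h' i j hadj, h i j hadj, Pi.add_apply]; ring⟩

theorem ClickStep.potentialEquiv (h : ClickStep Y r s) : PotentialEquiv Y r s := by
  classical
  obtain ⟨hr, v, hv, rfl⟩ := h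
  exact ⟨Pi.single v 1, fun i j hadj => edgeSign_click hr.1 hv hadj⟩

def KQuot.mk (a : Acyc Y) : KQuot Y := Quot.mk _ a

theorem KQuot.mk_surjective : Function.Surjective (KQuot.mk : Acyc Y → KQuot Y) :=
  Quot.mk_surjective

theorem KQuot.sound {a b : Acyc Y} (h : ClickStep Y a.1 b.1) : KQuot.mk a = KQuot.mk b :=
  Quot.sound h

theorem potentialEquiv_of_mk_eq {a b : Acyc Y} (h : KQuot.mk a = KQuot.mk b) :
    PotentialEquiv Y a.1 b.1 :=
  ((potentialEquiv_equivalence Y).comap Subtype.val).eqvGen_iff.1 <|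
    (Quot.eqvGen_exact h).mono fun _ _ => ClickStep.potentialEquiv

theorem exists_isSource_isMin_potential [Finite V] [Nonempty V] (hs : s ∈ Acyc Y) {ψ : V → ℤ}
    (hψ : ∀ i j, Y.Adj i j → edgeSign s i j = edgeSign r i j + 2 * (ψ j - ψ i)) :
    ∃ v, IsSource s v ∧ ∀ u, ψ v ≤ ψ u := by
  obtain ⟨w, hw⟩ := Finite.exists_min ψ
  obtain ⟨v, hv, hmin⟩ := hs.2.wellFounded.has_min {u | ψ u = ψ w} ⟨w, rfl⟩
  change ψ v = ψ w at hv
  refine ⟨v, fun u hu => hmin u ?_ hu, fun u => hv ▸ hw u⟩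
  have hsign := hψ v u ((hs.1.1 v u).2 (Or.inr hu))
  rw [hs.1.edgeSign_eq_neg_one hu] at hsign
  have := neg_one_le_edgeSign r v u
  have := hw u
  change ψ u = ψ w
  omega

theorem mk_eq_of_potential_le [Fintype V] (hr : r ∈ Acyc Y) (hs : s ∈ Acyc Y) {ψ : V → ℤ}
    {M : ℤ} (hle : ∀ u, ψ u ≤ M)
    (hψ : ∀ i j, Y.Adj i j → edgeSign s i j = edgeSign r i j + 2 * (ψ j - ψ i)) :
    KQuot.mk ⟨s, hs⟩ = KQuot.mk ⟨r, hr⟩ := by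
  induction hn : ∑ u, (M - ψ u).toNat using Nat.strong_induction_on generalizing s ψ with
  | _ n ih =>
  by_cases htop : ∀ u, ψ u = M
  · obtain rfl : s = r :=
      hs.1.eq_of_edgeSign_eq hr.1 fun i j hadj => by simp [hψ i j hadj, htop]
    rfl
  obtain ⟨u₀, hu₀⟩ := not_forall.1 htop
  have : Nonempty V := ⟨u₀⟩
  obtain ⟨v, hv, hmin⟩ := exists_isSource_isMin_potential hs hψ
  have hvM : ψ v < M := (hmin u₀).trans_lt ((hle u₀).lt_of_ne hu₀)
  classical
  let ψ' : V → ℤ := ψ + Pi.single v 1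
  have hψ'v : ψ' v = ψ v + 1 := by simp [ψ']
  have hψ'ne : ∀ u, u ≠ v → ψ' u = ψ u := fun u hu => by simp [ψ', Pi.single_eq_of_ne hu]
  refine (KQuot.sound ⟨hs, v, hv, rfl⟩).trans
    (ih _ ?_ (click_mem_acyc hs hv) (ψ := ψ') (fun u => ?_) (fun i j hadj => ?_) rfl)
  · rw [← hn]
    apply Finset.sum_lt_sum (fun u _ => ?_) ⟨v, Finset.mem_univ v, by rw [hψ'v]; omega⟩
    by_cases hu : u = v
    · subst hu; rw [hψ'v]; omega
    · rw [hψ'ne u hu]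
  · by_cases hu : u = v
    · subst hu; rw [hψ'v]; omega
    · rw [hψ'ne u hu]; exact hle u
  · rw [edgeSign_click hs.1 hv hadj, hψ i j hadj]
    simp only [ψ', Pi.add_apply]
    ring

theorem mk_eq_mk_iff [Fintype V] {a b : Acyc Y} :
    KQuot.mk a = KQuot.mk b ↔ PotentialEquiv Y a.1 b.1 := by
  refine ⟨potentialEquiv_of_mk_eq, fun ⟨ψ, hψ⟩ => ?_⟩
  obtain ⟨M, hM⟩ := (Set.finite_range ψ).bddAbove
  exact (mk_eq_of_potential_le a.2 b.2 (fun u => hM ⟨u, rfl⟩) hψ).symm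

variable (Y) in
def reverse : KQuot Y → KQuot Y :=
  Quot.lift (fun a => KQuot.mk ⟨Function.swap a.1, swap_mem_acyc a.2⟩)
    fun _ _ h => (KQuot.sound h.swap).symm

theorem reverse_mk (a : Acyc Y) :
    reverse Y (KQuot.mk a) = KQuot.mk ⟨Function.swap a.1, swap_mem_acyc a.2⟩ := rfl

theorem reverse_involutive : Function.Involutive (reverse Y) := by
  rintro ⟨a⟩
  rfl

variable (Y) in
def IsGraded (r : V → V → Prop) : Prop :=
  ∃ φ : V → ℤ, ∀ i j, Y.Adj i j → edgeSign r i j = φ j - φ i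

theorem reverse_mk_eq_self_iff [Fintype V] (a : Acyc Y) :
    reverse Y (KQuot.mk a) = KQuot.mk a ↔ IsGraded Y a.1 := by
  rw [reverse_mk, mk_eq_mk_iff]
  constructor
  · rintro ⟨ψ, hψ⟩
    refine ⟨ψ, fun i j hadj => ?_⟩
    have h := hψ i j hadj
    dsimp only at h
    rw [edgeSign_swap a.1] at h
    linarith
  · rintro ⟨φ, hφ⟩
    refine ⟨φ, fun i j hadj => ?_⟩
    dsimp only
    rw [edgeSign_swap a.1, hφ i j hadj]
    ring

theorem IsGraded.colorable (ho : IsOrientation Y r) (hr : IsGraded Y r) : Y.Colorable 2 := by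
  obtain ⟨φ, hφ⟩ := hr
  refine (SimpleGraph.Coloring.mk (fun v => (φ v : ZMod 2)) fun {i j} hadj heq => ?_).colorable
  rw [ZMod.intCast_eq_intCast_iff_dvd_sub, ← hφ i j hadj] at heq
  rcases ho.edgeSign_eq_one_or_neg_one hadj with h | h <;> rw [h] at heq <;> norm_num at heq

theorem exists_isGraded_of_colorable (hY : Y.Colorable 2) : ∃ r ∈ Acyc Y, IsGraded Y r := by
  obtain ⟨C⟩ := hY
  let φ : V → ℤ := fun v => (C v).val
  have hφ : ∀ {i j}, Y.Adj i j → φ i ≠ φ j := fun hadj h =>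
    C.valid hadj (Fin.ext (Nat.cast_inj.1 h))
  have hφ01 : ∀ v, φ v = 0 ∨ φ v = 1 := fun v => by have := (C v).isLt; simp only [φ]; omega
  let r : V → V → Prop := fun i j => Y.Adj i j ∧ φ i < φ j
  have ho : IsOrientation Y r :=
    ⟨fun i j => ⟨fun h => (hφ h).lt_or_gt.imp (⟨h, ·⟩) (⟨h.symm, ·⟩),
      by rintro (h | h); exacts [h.1, h.1.symm]⟩,
      fun i j h h' => h.2.not_gt h'.2⟩
  refine ⟨r, ⟨ho, isAcyclicRel_of_strictMono φ fun _ _ h => h.2⟩, φ, fun i j hadj => ?_⟩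
  rcases ((ho.1 i j).1 hadj) with h | h
  · rw [ho.edgeSign_eq_one h]
    have := hφ01 i; have := hφ01 j; have := h.2; omega
  · rw [ho.edgeSign_eq_neg_one h]
    have := hφ01 i; have := hφ01 j; have := h.2; omega

theorem IsGraded.potentialEquiv (hY : Y.Connected) (hr : IsOrientation Y r)
    (hs : IsOrientation Y s) (hgr : IsGraded Y r) (hgs : IsGraded Y s) :
    PotentialEquiv Y r s := by
  obtain ⟨φ, hφ⟩ := hgr
  obtain ⟨χ, hχ⟩ := hgs
  have hparity : ∀ i j, Y.Adj i j → (χ i - φ i) % 2 = (χ j - φ j) % 2 := by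
    intro i j hadj
    apply Int.ModEq.eq
    rw [Int.modEq_iff_dvd, ← even_iff_two_dvd]
    have heven := (hr.odd_edgeSign hadj).sub_odd (hs.odd_edgeSign hadj)
    rw [hφ i j hadj, hχ i j hadj] at heven
    rw [show χ j - φ j - (χ i - φ i) = -(φ j - φ i - (χ j - χ i)) by ring]
    exact heven.neg
  obtain ⟨v₀⟩ := hY.nonempty
  choose ψ hψ using fun u =>
    Int.ModEq.dvd ((hY.preconnected v₀ u).eq_of_forall_adj hparity)
  refine ⟨ψ, fun i j hadj => ?_⟩
  rw [hφ i j hadj, hχ i j hadj]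
  linarith [hψ i, hψ j]

instance [Finite V] : Finite (KQuot Y) := Quot.finite _

open Classical in
theorem card_fixedPoints_reverse [Fintype V] (hY : Y.Connected) :
    Nat.card (Function.fixedPoints (reverse Y)) = if Y.Colorable 2 then 1 else 0 := by
  split_ifs with hcol
  · rw [Nat.card_eq_one_iff_unique]
    refine ⟨⟨fun ⟨p, hp⟩ ⟨q, hq⟩ => Subtype.ext ?_⟩, ?_⟩
    · obtain ⟨a, rfl⟩ := KQuot.mk_surjective p
      obtain ⟨b, rfl⟩ := KQuot.mk_surjective q
      exact mk_eq_mk_iff.2 <| ((reverse_mk_eq_self_iff a).1 hp).potentialEquiv hY a.2.1 b.2.1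
        ((reverse_mk_eq_self_iff b).1 hq)
    · obtain ⟨r, hr, hg⟩ := exists_isGraded_of_colorable hcol
      exact ⟨⟨KQuot.mk ⟨r, hr⟩, (reverse_mk_eq_self_iff _).2 hg⟩⟩
  · have : IsEmpty (Function.fixedPoints (reverse Y)) := ⟨fun ⟨p, hp⟩ => by
      obtain ⟨a, rfl⟩ := KQuot.mk_surjective p
      exact hcol (((reverse_mk_eq_self_iff a).1 hp).colorable a.2.1)⟩
    exact Nat.card_of_isEmpty

end

/-- a connected graph Y is bipartite iff κ(Y), the number of
click-equivalence classes of acyclic orientations, is odd. -/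
theorem bipartite_iff_kappa_odd {V : Type*} [Fintype V] (Y : SimpleGraph V)
    (hY : Y.Connected) :
    Y.Colorable 2 ↔ Odd (kappa Y) := by
  rw [Nat.odd_iff, kappa, (reverse_involutive (Y := Y)).card_modEq_card_fixedPoints,
    card_fixedPoints_reverse hY]
  split_ifs with h <;> simp [h]

end AcycPaper
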